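/- arXiv:math/9805119 — 5 statements merged into one kernel-verified Lean document; each statement's English description precedes it below -/
import Mathlib

section
/- The linear map Π is idempotent, Π ∘ Π = Π, and its image is exactly the set of right π-invariant elements of A: Π(A) = { b ∈ A : (id_A ⊗ π)(Δ(b)) = b ⊗ 1_H }. -/
open TensorProduct

/-- The projection `Π : A → A` defined by `Π(a) = a₁ · i(κ_H(π(a₂)))` (Sweedler notation),
for bialgebra homomorphisms `π : A → H` and `i : H → A`. -/
noncomputable def PiMap (K : Type*) {A H : Type*} [CommRing K] [Ring A] [Ring H]
    [HopfAlgebra K A] [HopfAlgebra K H]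
    (π : A →ₐc[K] H) (i : H →ₐc[K] A) : A →ₗ[K] A :=
  (LinearMap.mul' K A) ∘ₗ
    (TensorProduct.map LinearMap.id
      ((i : H →ₗ[K] A) ∘ₗ (HopfAlgebra.antipode (R := K) (A := H)) ∘ₗ (π : A →ₗ[K] H))) ∘ₗ
    (Coalgebra.comul (R := K) (A := A))

/-!
Write `ρ = (id ⊗ π) ∘ Δ : A → A ⊗ H`, an algebra map, and `ι₁ a = a ⊗ 1`, `ι₂ h = 1 ⊗ h`. In the
convolution algebra `Hom(H, A ⊗ H)` the algebra map `φ = ρ ∘ i` factors as `φ = (ι₁ ∘ i) * ι₂`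
because `π ∘ i = id`, and composing an algebra map with the antipode inverts it, so
`ι₂ * φ κ = ι₁ i κ`. As `Π = id * i κ π` and `ρ = ι₁ * ι₂ π`, multiplicativity of `ρ` and
precomposition with the coalgebra map `π` give `ρ ∘ Π = ι₁ * ι₂ π * φ κ π = ι₁ * ι₁ i κ π = ι₁ ∘ Π`,
so every `Π a` is coinvariant. Conversely `Π b = b · i κ(1) = b` for coinvariant `b`.
-/

open Coalgebra WithConv

section Convolution
variable {K H B : Type*} [CommRing K] [Ring H] [HopfAlgebra K H] [Ring B] [Algebra K B]

lemma toConv_comp_antipode_mul (f : H →ₐ[K] B) :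
    toConv (f.toLinearMap ∘ₗ HopfAlgebra.antipode K) * toConv f.toLinearMap = 1 := by
  have := LinearMap.algHom_comp_convMul_distrib f (toConv (HopfAlgebra.antipode K)) (toConv .id)
  rw [LinearMap.antipode_mul_id] at this
  ext c
  simpa using congr($this.symm c)

lemma mul_toConv_comp_antipode (f : H →ₐ[K] B) :
    toConv f.toLinearMap * toConv (f.toLinearMap ∘ₗ HopfAlgebra.antipode K) = 1 := by
  have := LinearMap.algHom_comp_convMul_distrib f (toConv .id) (toConv (HopfAlgebra.antipode K))
  rw [LinearMap.id_mul_antipode] at this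
  ext c
  simpa using congr($this.symm c)

end Convolution

section RightCoinvariants
variable {K A H : Type*} [CommRing K] [Ring A] [Ring H] [HopfAlgebra K A] [HopfAlgebra K H]
  (π : A →ₐc[K] H) (i : H →ₐc[K] A)

open Algebra.TensorProduct (includeLeft includeRight)

local notation "ι₁" => AlgHom.toLinearMap (includeLeft : A →ₐ[K] A ⊗[K] H)
local notation "ι₂" => AlgHom.toLinearMap (includeRight : H →ₐ[K] A ⊗[K] H)

lemma includeLeft_comp_convMul_includeRight_comp {C : Type*} [AddCommMonoid C] [Module K C]
    [Coalgebra K C] (f : C →ₗ[K] A) (g : C →ₗ[K] H) :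
    toConv (ι₁ ∘ₗ f) * toConv (ι₂ ∘ₗ g) = toConv (TensorProduct.map f g ∘ₗ comul) := by
  have hmul : LinearMap.mul' K (A ⊗[K] H) ∘ₗ
      TensorProduct.map (ι₁ ∘ₗ f) (ι₂ ∘ₗ g) = TensorProduct.map f g :=
    TensorProduct.ext' fun x y => by simp
  rw [LinearMap.convMul_def, ← LinearMap.comp_assoc, ofConv_toConv, ofConv_toConv, hmul]

noncomputable def rightCoaction : A →ₐ[K] A ⊗[K] H :=
  (Algebra.TensorProduct.map (AlgHom.id K A) (π : A →ₐ[K] H)).comp (Bialgebra.comulAlgHom K A)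

lemma rightCoaction_toLinearMap :
    (rightCoaction π).toLinearMap = TensorProduct.map LinearMap.id (π : A →ₗ[K] H) ∘ₗ comul :=
  rfl

lemma rightCoaction_apply (a : A) :
    rightCoaction π a = TensorProduct.map LinearMap.id (π : A →ₗ[K] H) (comul a) :=
  rfl

lemma toConv_rightCoaction :
    toConv (rightCoaction π).toLinearMap = toConv ι₁ * toConv (ι₂ ∘ₗ (π : A →ₗ[K] H)) :=
  (includeLeft_comp_convMul_includeRight_comp LinearMap.id _).symm

lemma rightCoaction_comp_toLinearMap (hπi : π.comp i = BialgHom.id K H) :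
    (rightCoaction π).toLinearMap ∘ₗ (i : H →ₗ[K] A) =
      TensorProduct.map (i : H →ₗ[K] A) LinearMap.id ∘ₗ comul := by
  have hπi' : (π : A →ₗ[K] H) ∘ₗ (i : H →ₗ[K] A) = LinearMap.id := congr(($hπi).toLinearMap)
  rw [rightCoaction_toLinearMap, LinearMap.comp_assoc, ← CoalgHomClass.map_comp_comul i,
    ← LinearMap.comp_assoc, ← TensorProduct.map_comp, hπi', LinearMap.id_comp]

lemma includeRight_convMul_rightCoaction_comp_antipode (hπi : π.comp i = BialgHom.id K H) :
    toConv ι₂ *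
        toConv ((rightCoaction π).toLinearMap ∘ₗ (i : H →ₗ[K] A) ∘ₗ HopfAlgebra.antipode K) =
      toConv (ι₁ ∘ₗ (i : H →ₗ[K] A) ∘ₗ HopfAlgebra.antipode K) := by
  let U := (includeLeft : A →ₐ[K] A ⊗[K] H).comp (i : H →ₐ[K] A)
  let V := (includeRight : H →ₐ[K] A ⊗[K] H)
  let φ := (rightCoaction π).comp (i : H →ₐ[K] A)
  change toConv V.toLinearMap * toConv (φ.toLinearMap ∘ₗ HopfAlgebra.antipode K) =
    toConv (U.toLinearMap ∘ₗ HopfAlgebra.antipode K)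
  -- `φ κ` is a left inverse of `φ = U * V`, so `V * φ κ = U⁻¹ = U κ`.
  have hφ : toConv φ.toLinearMap = toConv U.toLinearMap * toConv V.toLinearMap :=
    congr(toConv $(rightCoaction_comp_toLinearMap π i hπi)).trans
      (includeLeft_comp_convMul_includeRight_comp _ LinearMap.id).symm
  have hφκU : toConv (φ.toLinearMap ∘ₗ HopfAlgebra.antipode K) * toConv U.toLinearMap =
      toConv (V.toLinearMap ∘ₗ HopfAlgebra.antipode K) :=
    left_inv_eq_right_inv (by rw [mul_assoc, ← hφ, toConv_comp_antipode_mul])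
      (mul_toConv_comp_antipode V)
  calc _ = toConv V.toLinearMap * (toConv (φ.toLinearMap ∘ₗ HopfAlgebra.antipode K) *
        toConv U.toLinearMap) * toConv (U.toLinearMap ∘ₗ HopfAlgebra.antipode K) := by
        rw [mul_assoc, mul_assoc, mul_toConv_comp_antipode, mul_one]
    _ = _ := by rw [hφκU, mul_toConv_comp_antipode, one_mul]

lemma rightCoaction_piMap (hπi : π.comp i = BialgHom.id K H) (a : A) :
    rightCoaction π (PiMap K π i a) = PiMap K π i a ⊗ₜ[K] 1 := by
  suffices (rightCoaction π).toLinearMap ∘ₗ PiMap K π i = ι₁ ∘ₗ PiMap K π i from congr($this a)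
  have hPi : PiMap K π i = (toConv LinearMap.id *
      toConv ((i : H →ₗ[K] A) ∘ₗ HopfAlgebra.antipode K ∘ₗ (π : A →ₗ[K] H))).ofConv := rfl
  apply toConv_injective
  calc toConv ((rightCoaction π).toLinearMap ∘ₗ PiMap K π i)
      = toConv ι₁ * toConv (ι₂ ∘ₗ (π : A →ₗ[K] H)) *
          toConv (((rightCoaction π).toLinearMap ∘ₗ (i : H →ₗ[K] A) ∘ₗ
            HopfAlgebra.antipode K) ∘ₗ (π : A →ₗ[K] H)) := by
        rw [hPi, LinearMap.algHom_comp_convMul_distrib, toConv_ofConv, ← toConv_rightCoaction]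
        rfl
    _ = toConv ι₁ *
          toConv ((ι₁ ∘ₗ (i : H →ₗ[K] A) ∘ₗ HopfAlgebra.antipode K) ∘ₗ (π : A →ₗ[K] H)) := by
        have := LinearMap.convMul_comp_coalgHom_distrib (toConv ι₂)
          (toConv ((rightCoaction π).toLinearMap ∘ₗ (i : H →ₗ[K] A) ∘ₗ
            HopfAlgebra.antipode K)) (π : A →ₗc[K] H)
        rw [includeRight_convMul_rightCoaction_comp_antipode π i hπi] at this
        rw [mul_assoc]
        exact congr(_ * toConv $this).symm
    _ = toConv (ι₁ ∘ₗ PiMap K π i) := by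
        rw [hPi, LinearMap.algHom_comp_convMul_distrib]
        rfl

lemma piMap_eq_self_of_rightCoaction {b : A} (hb : rightCoaction π b = b ⊗ₜ[K] 1) :
    PiMap K π i b = b := by
  have hPi : PiMap K π i b = LinearMap.mul' K A
      (TensorProduct.map LinearMap.id ((i : H →ₗ[K] A) ∘ₗ HopfAlgebra.antipode K)
        (rightCoaction π b)) := by
    rw [rightCoaction_apply, TensorProduct.map_map]
    rfl
  rw [hPi, hb]
  simp [HopfAlgebra.antipode_one]

end RightCoinvariants

/-- `Π` is idempotent and its image is exactly the set of right `π`-invariant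
elements of `A`, i.e. `Π(A) = { b ∈ A : (id_A ⊗ π)(Δ(b)) = b ⊗ 1_H }`. -/
theorem statement0 (K A H : Type*) [CommRing K] [Ring A] [Ring H]
    [HopfAlgebra K A] [HopfAlgebra K H]
    (π : A →ₐc[K] H) (i : H →ₐc[K] A)
    (hπi : π.comp i = BialgHom.id K H) :
    (PiMap K π i) ∘ₗ (PiMap K π i) = PiMap K π i ∧
      ∀ b : A,
        b ∈ LinearMap.range (PiMap K π i) ↔
          (TensorProduct.map (LinearMap.id : A →ₗ[K] A) (π : A →ₗ[K] H))
              (Coalgebra.comul (R := K) b) = b ⊗ₜ[K] (1 : H) := by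
  have hidem (a : A) : PiMap K π i (PiMap K π i a) = PiMap K π i a :=
    piMap_eq_self_of_rightCoaction π i (rightCoaction_piMap π i hπi a)
  refine ⟨LinearMap.ext hidem, fun b => ⟨?_, fun hb => ⟨b, piMap_eq_self_of_rightCoaction π i hb⟩⟩⟩
  rintro ⟨a, rfl⟩
  exact rightCoaction_piMap π i hπi a
end

section
/- For every h ∈ H and every b ∈ B the adjoint action ad_h(b) := i(h₁) · b · i(κ_H(h₂)) again belongs to B, and ad is a left action: ad_{hh'}(b) = ad_h(ad_{h'}(b)) and ad_{1_H}(b) = b. Moreover, for every b ∈ B, the element (π ⊗ id_A)(Δ(b)) lies in the submodule H ⊗ B of H ⊗ A. -/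
/-!
Let `ρ = (id ⊗ π) ∘ Δ : A → A ⊗ H`, an algebra map, and write `S` for antipodes. In a convolution
algebra `Hom(C, D)` an algebra map `φ` out of a Hopf algebra has convolution inverse `φ ∘ S`; this
yields `Δ(Π a) = a₁ i(Sπ a₃) ⊗ Π(a₂)` and, as `π ∘ Π = ε`, also `ρ ∘ Π = Π ⊗ 1`. Since `Π b = b`
whenever `ρ b = b ⊗ 1`, the image `B` of `Π` is exactly the space of coinvariants of `ρ`. From
`ρ(i h) = i(h₁) ⊗ h₂` one gets, for a coinvariant `b`,
`ρ(ad_h b) = i(h₁) b i(S h₄) ⊗ h₂ S(h₃) = ad_h b ⊗ 1`, so `ad` preserves `B`. The action laws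
hold because `Δ` is multiplicative and `S` anti-multiplicative, and the formula for `Δ(Π a)`
gives `(π ⊗ id)Δ(Π a) = π(a₁ i(Sπ a₃)) ⊗ Π(a₂) ∈ H ⊗ B`.
-/

open TensorProduct

/-- The adjoint action `ad_h(b) = i(h₁) · b · i(κ_H(h₂))` (Sweedler notation). -/
noncomputable def adAct (K : Type*) {A H : Type*} [CommRing K] [Ring A] [Ring H]
    [HopfAlgebra K A] [HopfAlgebra K H]
    (i : H →ₐc[K] A) (h : H) (b : A) : A :=
  (LinearMap.mul' K A)
    ((LinearMap.lTensor A (LinearMap.mul' K A))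
      ((LinearMap.lTensor A ((TensorProduct.mk K A A) b))
        ((TensorProduct.map (i : H →ₗ[K] A)
            ((i : H →ₗ[K] A) ∘ₗ (HopfAlgebra.antipode (R := K) (A := H))))
          (Coalgebra.comul (R := K) h))))

open WithConv Coalgebra

namespace LinearMap

variable {K C D : Type*} [CommSemiring K] [AddCommMonoid C] [Module K C] [Coalgebra K C]
  [Semiring D] [Algebra K D]

lemma mulLeft_comp_convMul (x : D) (f g : WithConv (C →ₗ[K] D)) :
    toConv (mulLeft K x ∘ₗ (f * g).ofConv) = toConv (mulLeft K x ∘ₗ f.ofConv) * g := by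
  ext c; simp [(ℛ K c).convMul_apply, mul_assoc]

lemma mulRight_comp_convMul (x : D) (f g : WithConv (C →ₗ[K] D)) :
    toConv (mulRight K x ∘ₗ (f * g).ofConv) = f * toConv (mulRight K x ∘ₗ g.ofConv) := by
  ext c; simp [(ℛ K c).convMul_apply, mul_assoc]

lemma mulRight_comp_convMul_eq_convMul_mulLeft_comp (x : D) (f g : WithConv (C →ₗ[K] D)) :
    toConv (mulRight K x ∘ₗ f.ofConv) * g = f * toConv (mulLeft K x ∘ₗ g.ofConv) := by
  ext c; simp [(ℛ K c).convMul_apply, mul_assoc]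

end LinearMap

namespace HopfAlgebra

variable {K H D E : Type*} [CommSemiring K] [Semiring H] [HopfAlgebra K H] [Semiring D]
  [Algebra K D] [Semiring E] [Algebra K E]

lemma algHom_comp_antipode_convMul (φ : H →ₐ[K] D) :
    toConv (φ.toLinearMap ∘ₗ antipode K) * toConv φ.toLinearMap = 1 := by
  ext c
  simp [(ℛ K c).convMul_apply, ← map_mul, ← map_sum, sum_antipode_mul_eq_algebraMap_counit]

lemma convMul_algHom_comp_antipode (φ : H →ₐ[K] D) :
    toConv φ.toLinearMap * toConv (φ.toLinearMap ∘ₗ antipode K) = 1 := by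
  ext c
  simp [(ℛ K c).convMul_apply, ← map_mul, ← map_sum, sum_mul_antipode_eq_algebraMap_counit]

open Algebra.TensorProduct in
lemma map_comp_comul_eq_convMul (φ : H →ₐ[K] D) (ψ : H →ₐ[K] E) :
    toConv ((map φ ψ).toLinearMap ∘ₗ comul) =
      toConv ((includeLeft : D →ₐ[K] D ⊗[K] E).toLinearMap ∘ₗ φ.toLinearMap) *
        toConv ((includeRight : E →ₐ[K] D ⊗[K] E).toLinearMap ∘ₗ ψ.toLinearMap) := by
  ext c; simp [(ℛ K c).convMul_apply, ← (ℛ K c).eq]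

open Algebra.TensorProduct in
lemma map_comp_comul_comp_antipode (φ : H →ₐ[K] D) (ψ : H →ₐ[K] E) :
    toConv ((map φ ψ).toLinearMap ∘ₗ comul ∘ₗ antipode K) =
      toConv ((includeRight : E →ₐ[K] D ⊗[K] E).toLinearMap ∘ₗ ψ.toLinearMap ∘ₗ antipode K) *
        toConv ((includeLeft : D →ₐ[K] D ⊗[K] E).toLinearMap ∘ₗ φ.toLinearMap ∘ₗ antipode K) := by
  set χ := (map φ ψ).comp (Bialgebra.comulAlgHom K H)
  set φ' := (includeLeft : D →ₐ[K] D ⊗[K] E).comp φ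
  set ψ' := (includeRight : E →ₐ[K] D ⊗[K] E).comp ψ
  have hχ : toConv χ.toLinearMap = toConv φ'.toLinearMap * toConv ψ'.toLinearMap :=
    map_comp_comul_eq_convMul φ ψ
  -- `χ ∘ S` is a left convolution inverse of the algebra map `χ`, the right side a right one.
  refine left_inv_eq_right_inv (algHom_comp_antipode_convMul χ) ?_
  calc toConv χ.toLinearMap * (toConv (ψ'.toLinearMap ∘ₗ antipode K) *
        toConv (φ'.toLinearMap ∘ₗ antipode K))
      = toConv φ'.toLinearMap * ((toConv ψ'.toLinearMap * toConv (ψ'.toLinearMap ∘ₗ antipode K)) *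
          toConv (φ'.toLinearMap ∘ₗ antipode K)) := by rw [hχ]; simp only [mul_assoc]
    _ = 1 := by rw [convMul_algHom_comp_antipode, one_mul, convMul_algHom_comp_antipode]

/-- Sweedler form: `φ(h₁) ψ(h₂) x ψ(S h₃) φ(S h₄) = φ(h₁) x φ(S h₂)` when `x` commutes with `ψ`. -/
lemma mulRight_comp_convMul_conj_of_commute (φ ψ : H →ₐ[K] D) {x : D}
    (hx : ∀ h, Commute x (ψ h)) :
    toConv (LinearMap.mulRight K x ∘ₗ (toConv φ.toLinearMap * toConv ψ.toLinearMap).ofConv) *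
        (toConv (ψ.toLinearMap ∘ₗ antipode K) * toConv (φ.toLinearMap ∘ₗ antipode K)) =
      toConv (LinearMap.mulRight K x ∘ₗ φ.toLinearMap) * toConv (φ.toLinearMap ∘ₗ antipode K) := by
  have hψx : LinearMap.mulRight K x ∘ₗ ψ.toLinearMap = LinearMap.mulLeft K x ∘ₗ ψ.toLinearMap := by
    ext h; exact (hx h).symm
  have hψ : toConv (LinearMap.mulLeft K x ∘ₗ ψ.toLinearMap) *
      toConv (ψ.toLinearMap ∘ₗ antipode K) =
      toConv (LinearMap.mulLeft K x ∘ₗ (1 : WithConv (H →ₗ[K] D)).ofConv) := by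
    rw [← convMul_algHom_comp_antipode ψ]
    exact (LinearMap.mulLeft_comp_convMul _ _ _).symm
  rw [LinearMap.mulRight_comp_convMul, ofConv_toConv, hψx, mul_assoc,
    ← mul_assoc (toConv (LinearMap.mulLeft K x ∘ₗ ψ.toLinearMap)), hψ,
    ← LinearMap.mulLeft_comp_convMul, one_mul, ofConv_toConv,
    ← LinearMap.mulRight_comp_convMul_eq_convMul_mulLeft_comp]

end HopfAlgebra

namespace HopfProjection

open HopfAlgebra

variable {K A H : Type*} [CommRing K] [Ring A] [Ring H] [HopfAlgebra K A] [HopfAlgebra K H]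
  (π : A →ₐc[K] H) (i : H →ₐc[K] A)

local notation "jl" =>
  AlgHom.toLinearMap (Algebra.TensorProduct.includeLeft (R := K) (S := K) (A := A) (B := A))
local notation "jr" =>
  AlgHom.toLinearMap (Algebra.TensorProduct.includeRight (R := K) (A := A) (B := A))

lemma comul_comp_comp_antipode :
    toConv (comul ∘ₗ (i : H →ₗ[K] A) ∘ₗ antipode K) =
      toConv (jr ∘ₗ (i : H →ₗ[K] A) ∘ₗ antipode K) *
        toConv (jl ∘ₗ (i : H →ₗ[K] A) ∘ₗ antipode K) := by
  have hi : comul ∘ₗ (i : H →ₗ[K] A) =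
      (Algebra.TensorProduct.map (i : H →ₐ[K] A) (i : H →ₐ[K] A)).toLinearMap ∘ₗ comul :=
    (CoalgHomClass.map_comp_comul i).symm
  rw [← LinearMap.comp_assoc, hi]
  exact map_comp_comul_comp_antipode (i : H →ₐ[K] A) (i : H →ₐ[K] A)

lemma comul_comp_PiMap : toConv (comul ∘ₗ PiMap K π i) =
    toConv jl * (toConv (jr ∘ₗ PiMap K π i) *
      toConv (jl ∘ₗ (i : H →ₗ[K] A) ∘ₗ antipode K ∘ₗ (π : A →ₗ[K] H))) := by
  set iSπ := (i : H →ₗ[K] A) ∘ₗ antipode K ∘ₗ (π : A →ₗ[K] H)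
  have hcomul : toConv (comul : A →ₗ[K] A ⊗[K] A) = toConv jl * toConv jr := by
    simpa using map_comp_comul_eq_convMul (AlgHom.id K A) (AlgHom.id K A)
  have hcomul_Pi : toConv (comul ∘ₗ PiMap K π i) = toConv comul * toConv (comul ∘ₗ iSπ) :=
    congrArg toConv
      (LinearMap.algHom_comp_convMul_distrib (Bialgebra.comulAlgHom K A) (toConv .id) (toConv iSπ))
  have hcomul_iSπ : toConv (comul ∘ₗ iSπ) = toConv (jr ∘ₗ iSπ) * toConv (jl ∘ₗ iSπ) :=
    congrArg toConv ((congrArg (fun f => f.ofConv ∘ₗ (π : A →ₗ[K] H))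
      (comul_comp_comp_antipode i)).trans
      (LinearMap.convMul_comp_coalgHom_distrib _ _ (π : A →ₗc[K] H)))
  have hjr_Pi : toConv (jr ∘ₗ PiMap K π i) = toConv jr * toConv (jr ∘ₗ iSπ) :=
    congrArg toConv (LinearMap.algHom_comp_convMul_distrib Algebra.TensorProduct.includeRight
      (toConv .id) (toConv iSπ))
  rw [hcomul_Pi, hcomul, hcomul_iSπ, hjr_Pi]
  simp only [mul_assoc]

lemma PiMap_eq_sum {ι : Type*} {a : A} (r : Repr K a ι) :
    PiMap K π i a = ∑ t ∈ r.index, r.left t * i (antipode K (π (r.right t))) := by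
  simp [PiMap, ← r.eq]

lemma apply_PiMap_eq_algebraMap_counit (hπi : π.comp i = BialgHom.id K H) (a : A) :
    π (PiMap K π i a) = algebraMap K H (counit a) := by
  have hπi' (h : H) : π (i h) = h := DFunLike.congr_fun hπi h
  rw [← CoalgHomClass.counit_comp_apply π, ← sum_mul_antipode_eq_algebraMap_counit
    ((ℛ K a).induced π)]
  simp [PiMap_eq_sum π i (ℛ K a), hπi', Repr.induced]

noncomputable def coaction : A →ₐ[K] A ⊗[K] H :=
  (Algebra.TensorProduct.map (AlgHom.id K A) (π : A →ₐ[K] H)).comp (Bialgebra.comulAlgHom K A)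

lemma coaction_comp_PiMap (hπi : π.comp i = BialgHom.id K H) :
    (coaction π).toLinearMap ∘ₗ PiMap K π i =
      (Algebra.TensorProduct.includeLeft (R := K) (S := K) (A := A) (B := H)).toLinearMap ∘ₗ
        PiMap K π i := by
  set T := Algebra.TensorProduct.map (AlgHom.id K A) (π : A →ₐ[K] H)
  set jl' := (Algebra.TensorProduct.includeLeft (R := K) (S := K) (A := A) (B := H)).toLinearMap
  have hl : T.toLinearMap ∘ₗ jl = jl' := by ext; simp [T, jl']
  have hr : (T.toLinearMap ∘ₗ jr) ∘ₗ PiMap K π i = (1 : WithConv (A →ₗ[K] A ⊗[K] H)).ofConv := by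
    ext a
    simp [T, apply_PiMap_eq_algebraMap_counit π i hπi, Algebra.algebraMap_eq_smul_one,
      TensorProduct.smul_tmul', Algebra.TensorProduct.one_def]
  have h := congrArg (fun f => toConv (T.toLinearMap ∘ₗ f.ofConv)) (comul_comp_PiMap π i)
  simp only [LinearMap.algHom_comp_convMul_distrib, toConv_ofConv, ← LinearMap.comp_assoc, hl,
    hr, one_mul] at h
  exact toConv_injective (h.trans (congrArg toConv (LinearMap.algHom_comp_convMul_distrib
    Algebra.TensorProduct.includeLeft (toConv .id)
    (toConv ((i : H →ₗ[K] A) ∘ₗ antipode K ∘ₗ (π : A →ₗ[K] H))))).symm)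

lemma PiMap_eq_self_of_coaction {b : A} (hb : coaction π b = b ⊗ₜ 1) : PiMap K π i b = b := by
  calc PiMap K π i b
      = LinearMap.mul' K A
          (TensorProduct.map .id ((i : H →ₗ[K] A) ∘ₗ antipode K) (coaction π b)) := by
        simp [PiMap, coaction, ← (ℛ K b).eq]
    _ = b := by simp [hb]

lemma mem_range_PiMap_iff (hπi : π.comp i = BialgHom.id K H) {b : A} :
    b ∈ LinearMap.range (PiMap K π i) ↔ coaction π b = b ⊗ₜ 1 := by
  constructor
  · rintro ⟨a, rfl⟩
    exact LinearMap.congr_fun (coaction_comp_PiMap π i hπi) a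
  · exact fun hb => ⟨b, PiMap_eq_self_of_coaction π i hb⟩

lemma adAct_eq_sum {ι : Type*} {h : H} (r : Repr K h ι) (b : A) :
    adAct K i h b = ∑ t ∈ r.index, i (r.left t) * b * i (antipode K (r.right t)) := by
  simp [adAct, ← r.eq, mul_assoc]

lemma adAct_eq_convMul (h : H) (b : A) :
    adAct K i h b = (toConv (LinearMap.mulRight K b ∘ₗ (i : H →ₗ[K] A)) *
      toConv ((i : H →ₗ[K] A) ∘ₗ antipode K)) h := by
  simp [adAct_eq_sum i (ℛ K h), (ℛ K h).convMul_apply]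

lemma coaction_comp_of_comp_eq_id (hπi : π.comp i = BialgHom.id K H) :
    (coaction π).comp (i : H →ₐ[K] A) =
      (Algebra.TensorProduct.map (i : H →ₐ[K] A) (AlgHom.id K H)).comp
        (Bialgebra.comulAlgHom K H) := by
  have hπi' (h : H) : π (i h) = h := DFunLike.congr_fun hπi h
  ext h
  simp [coaction, ← CoalgHomClass.map_comp_comul_apply, ← (ℛ K h).eq, hπi']

lemma coaction_adAct (hπi : π.comp i = BialgHom.id K H) {b : A} (hb : coaction π b = b ⊗ₜ 1)
    (h : H) : coaction π (adAct K i h b) = adAct K i h b ⊗ₜ 1 := by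
  set ρ := (coaction π).toLinearMap
  set ι := (i : H →ₗ[K] A)
  set x : A ⊗[K] H := b ⊗ₜ 1
  set jl' := (Algebra.TensorProduct.includeLeft (R := K) (S := K) (A := A) (B := H)).toLinearMap
  set jr' := (Algebra.TensorProduct.includeRight (R := K) (A := A) (B := H)).toLinearMap
  have hρι : toConv (ρ ∘ₗ ι) = toConv (jl' ∘ₗ ι) * toConv jr' :=
    (congrArg (fun f => toConv (AlgHom.toLinearMap f)) (coaction_comp_of_comp_eq_id π i hπi)).trans
      (map_comp_comul_eq_convMul (i : H →ₐ[K] A) (AlgHom.id K H))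
  have hριS : toConv (ρ ∘ₗ ι ∘ₗ antipode K) =
      toConv (jr' ∘ₗ antipode K) * toConv (jl' ∘ₗ ι ∘ₗ antipode K) :=
    (congrArg (fun f => toConv (AlgHom.toLinearMap f ∘ₗ antipode K))
      (coaction_comp_of_comp_eq_id π i hπi)).trans
      (map_comp_comul_comp_antipode (i : H →ₐ[K] A) (AlgHom.id K H))
  have hρR : ρ ∘ₗ LinearMap.mulRight K b = LinearMap.mulRight K x ∘ₗ ρ := by
    ext a; simp [ρ, x, hb]
  have hjlR : LinearMap.mulRight K x ∘ₗ jl' = jl' ∘ₗ LinearMap.mulRight K b := by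
    ext a; simp [x, jl']
  have hx (h : H) : Commute x (Algebra.TensorProduct.includeRight h) := by
    simp [x, Commute, SemiconjBy, Algebra.TensorProduct.tmul_mul_tmul]
  suffices hconv : toConv (ρ ∘ₗ (toConv (LinearMap.mulRight K b ∘ₗ ι) *
      toConv (ι ∘ₗ antipode K)).ofConv) = toConv (jl' ∘ₗ (toConv (LinearMap.mulRight K b ∘ₗ ι) *
      toConv (ι ∘ₗ antipode K)).ofConv) by
    rw [adAct_eq_convMul]
    exact LinearMap.congr_fun (congrArg ofConv hconv) h
  calc toConv (ρ ∘ₗ (toConv (LinearMap.mulRight K b ∘ₗ ι) * toConv (ι ∘ₗ antipode K)).ofConv)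
      = toConv (LinearMap.mulRight K x ∘ₗ ρ ∘ₗ ι) * toConv (ρ ∘ₗ ι ∘ₗ antipode K) := by
        rw [congrArg toConv (LinearMap.algHom_comp_convMul_distrib (coaction π) _ _),
          ofConv_toConv, ofConv_toConv, ← LinearMap.comp_assoc, hρR, LinearMap.comp_assoc]
    _ = toConv (LinearMap.mulRight K x ∘ₗ jl' ∘ₗ ι) * toConv (jl' ∘ₗ ι ∘ₗ antipode K) := by
        rw [show ρ ∘ₗ ι = (toConv (jl' ∘ₗ ι) * toConv jr').ofConv from congrArg ofConv hρι, hριS]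
        exact mulRight_comp_convMul_conj_of_commute
          ((Algebra.TensorProduct.includeLeft).comp (i : H →ₐ[K] A))
          Algebra.TensorProduct.includeRight hx
    _ = toConv (jl' ∘ₗ
          (toConv (LinearMap.mulRight K b ∘ₗ ι) * toConv (ι ∘ₗ antipode K)).ofConv) := by
        rw [← LinearMap.comp_assoc, hjlR, congrArg toConv
          (LinearMap.algHom_comp_convMul_distrib Algebra.TensorProduct.includeLeft _ _)]
        rfl

lemma adAct_one (b : A) : adAct K i 1 b = b := by
  simp [adAct, Algebra.TensorProduct.one_def]

lemma adAct_mul (h h' : H) (b : A) : adAct K i (h * h') b = adAct K i h (adAct K i h' b) := by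
  rw [adAct_eq_sum i ((ℛ K h).mul (ℛ K h')), adAct_eq_sum i (ℛ K h), adAct_eq_sum i (ℛ K h') b]
  simp [Finset.sum_product, Finset.mul_sum, Finset.sum_mul, antipode_mul_antidistrib, mul_assoc]

lemma map_comul_PiMap_mem_range (a : A) :
    TensorProduct.map (π : A →ₗ[K] H) .id (comul (PiMap K π i a)) ∈
      LinearMap.range (LinearMap.lTensor H (LinearMap.range (PiMap K π i)).subtype) := by
  rw [← LinearMap.comp_apply comul, ← ofConv_toConv (comul ∘ₗ _), comul_comp_PiMap,
    (ℛ K a).convMul_apply, map_sum]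
  refine Submodule.sum_mem _ fun t _ => ?_
  set r := ℛ K ((ℛ K a).right t)
  rw [r.convMul_apply, Finset.mul_sum, map_sum]
  refine Submodule.sum_mem _ fun u _ => ⟨π ((ℛ K a).left t * i (antipode K (π (r.right u)))) ⊗ₜ
    ⟨PiMap K π i (r.left u), LinearMap.mem_range_self _ _⟩, ?_⟩
  simp [Algebra.TensorProduct.tmul_mul_tmul]

end HopfProjection

/-- for every `h ∈ H` and `b ∈ B = Π(A)` the adjoint action
`ad_h(b) = i(h₁) b i(κ_H(h₂))` again belongs to `B`; `ad` is a left action on `B`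
(`ad_{hh'}(b) = ad_h(ad_{h'}(b))` and `ad_{1}(b) = b`); and `(π ⊗ id)(Δ(b)) ∈ H ⊗ B`
for every `b ∈ B`. -/
theorem statement3 (K A H : Type*) [CommRing K] [Ring A] [Ring H]
    [HopfAlgebra K A] [HopfAlgebra K H]
    (π : A →ₐc[K] H) (i : H →ₐc[K] A)
    (hπi : π.comp i = BialgHom.id K H) :
    (∀ (h : H) (b : A), b ∈ LinearMap.range (PiMap K π i) →
        adAct K i h b ∈ LinearMap.range (PiMap K π i)) ∧
    (∀ (h h' : H) (b : A), b ∈ LinearMap.range (PiMap K π i) →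
        adAct K i (h * h') b = adAct K i h (adAct K i h' b)) ∧
    (∀ b : A, b ∈ LinearMap.range (PiMap K π i) → adAct K i (1 : H) b = b) ∧
    (∀ b : A, b ∈ LinearMap.range (PiMap K π i) →
        (TensorProduct.map (π : A →ₗ[K] H) (LinearMap.id : A →ₗ[K] A))
            (Coalgebra.comul (R := K) b) ∈
          LinearMap.range
            (LinearMap.lTensor H (LinearMap.range (PiMap K π i)).subtype)) := by
  open HopfProjection in
  refine ⟨fun h b hb => ?_, fun h h' b _ => adAct_mul i h h' b, fun b _ => adAct_one i b,
    fun b ⟨a, ha⟩ => ha ▸ map_comul_PiMap_mem_range π i a⟩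
  rw [mem_range_PiMap_iff π i hπi] at hb ⊢
  exact coaction_adAct π i hπi hb h
end

section
/- The multiparametric GL R-matrix is invertible, and its inverse is obtained by inverting all deformation parameters: R_{q,r} · R_{q⁻¹,r⁻¹} = Id, i.e. Σ_{C,D} (R_{q,r})^{AB}_{CD} (R_{q⁻¹,r⁻¹})^{CD}_{EF} = δ^A_E δ^B_F for all A,B,E,F. -/
open Finset

/-- Kronecker delta with values in `ℂ`. -/
def kd {α : Type*} [DecidableEq α] (a b : α) : ℂ := if a = b then 1 else 0

/-- The multiparametric `GL_{q,r}(N)` R-matrix.  Indices are 0-based: the paper index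
`A ∈ {1,…,N}` corresponds to `A.val + 1`.
`R^{AB}_{CD} = δ^A_C δ^B_D (r/q_{AB} + (r−1)δ^{AB}) + (r−r⁻¹) δ^A_D δ^B_C θ^{AB}`,
with `θ^{AB} = 1` iff `A > B`. -/
noncomputable def Rgl (N : ℕ) (r : ℂ) (q : Fin N → Fin N → ℂ)
    (A B C D : Fin N) : ℂ :=
  kd A C * kd B D * (r / q A B + (r - 1) * kd A B)
    + (r - r⁻¹) * kd A D * kd B C * (if B < A then 1 else 0)

/-- The R-matrix with all deformation parameters inverted: `R_{q⁻¹,r⁻¹}`. -/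
noncomputable def RglInv (N : ℕ) (r : ℂ) (q : Fin N → Fin N → ℂ)
    (A B C D : Fin N) : ℂ :=
  Rgl N r⁻¹ (fun a b => (q a b)⁻¹) A B C D

noncomputable def rglWeight {N : ℕ} (r : ℂ) (q : Fin N → Fin N → ℂ) (A B : Fin N) : ℂ :=
  r / q A B + (r - 1) * kd A B

section

variable {N : ℕ} {r : ℂ} {q : Fin N → Fin N → ℂ}

lemma sum_sum_Rgl_mul (A B : Fin N) (g : Fin N → Fin N → ℂ) :
    ∑ C, ∑ D, Rgl N r q A B C D * g C D
      = rglWeight r q A B * g A B + (r - r⁻¹) * if B < A then g B A else 0 := by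
  simp only [Rgl, rglWeight, kd, add_mul, sum_add_distrib, ite_mul, mul_ite, one_mul, zero_mul,
    mul_one, mul_zero, sum_ite_eq, mem_univ, if_true]
  congr 1
  split_ifs <;> simp

lemma RglInv_eq (A B E F : Fin N) :
    RglInv N r q A B E F = kd A E * kd B F * rglWeight r⁻¹ (fun a b => (q a b)⁻¹) A B
      + (r⁻¹ - r) * kd A F * kd B E * if B < A then 1 else 0 := by
  rw [RglInv, Rgl, rglWeight, inv_inv]

lemma rglWeight_mul_rglWeight_inv (hr : r ≠ 0) (hqAA : ∀ A, q A A = r) {A B : Fin N}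
    (hqAB : q A B ≠ 0) : rglWeight r q A B * rglWeight r⁻¹ (fun a b => (q a b)⁻¹) A B = 1 := by
  by_cases hAB : A = B
  · subst hAB
    simp only [rglWeight, kd, if_true, hqAA, inv_div_inv]
    field_simp
    ring
  · simp only [rglWeight, kd, if_neg hAB]
    field_simp
    ring

lemma rglWeight_inv_swap (hr : r ≠ 0) {A B : Fin N} (hAB : A ≠ B)
    (hqAB : q A B ≠ 0) (hqBA : q B A * q A B = r ^ 2) :
    rglWeight r⁻¹ (fun a b => (q a b)⁻¹) B A = rglWeight r q A B := by
  simp only [rglWeight, kd, if_neg hAB, if_neg (Ne.symm hAB)]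
  field_simp
  linear_combination hqBA

end

theorem statement8_general (N : ℕ) (r : ℂ) (hr : r ≠ 0)
    (q : Fin N → Fin N → ℂ)
    (hqAA : ∀ A, q A A = r) (hqBA : ∀ A B, q B A * q A B = r ^ 2) :
    ∀ A B E F : Fin N,
      (∑ C : Fin N, ∑ D : Fin N, Rgl N r q A B C D * RglInv N r q C D E F)
        = kd A E * kd B F := by
  intro A B E F
  have hq0 : q A B ≠ 0 := right_ne_zero_of_mul ((hqBA A B) ▸ pow_ne_zero 2 hr)
  have hmul := rglWeight_mul_rglWeight_inv hr hqAA hq0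
  rw [sum_sum_Rgl_mul, RglInv_eq]
  by_cases hBA : B < A
  · have hswap := rglWeight_inv_swap hr hBA.ne' hq0 (hqBA A B)
    -- the crossing term of `R_{q⁻¹,r⁻¹}` at `(A,B)` cancels its diagonal term at `(B,A)`
    rw [RglInv_eq]
    simp only [if_pos hBA, if_neg (not_lt.2 hBA.le)]
    linear_combination kd A E * kd B F * hmul + (r - r⁻¹) * kd B E * kd A F * hswap
  · simp only [if_neg hBA]
    linear_combination kd A E * kd B F * hmul

/-- the multiparametric GL R-matrix is invertible, with inverse obtained by
inverting all the deformation parameters: `R_{q,r} · R_{q⁻¹,r⁻¹} = Id`. -/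
theorem statement8 (N : ℕ) (hN : 1 ≤ N) (r : ℂ) (hr : r ≠ 0)
    (q : Fin N → Fin N → ℂ) (hq0 : ∀ A B, q A B ≠ 0)
    (hqAA : ∀ A, q A A = r) (hqBA : ∀ A B, q B A * q A B = r ^ 2) :
    ∀ A B E F : Fin N,
      (∑ C : Fin N, ∑ D : Fin N, Rgl N r q A B C D * RglInv N r q C D E F)
        = kd A E * kd B F :=
  statement8_general N r hr q hqAA hqBA
end

section
/- Let R̂ be the matrix defined by R̂^{AB}_{CD} := R^{BA}_{CD}. Then R̂ satisfies the Hecke condition (R̂ − r·Id)(R̂ + r⁻¹·Id) = 0, i.e. R̂² = (r − r⁻¹) R̂ + Id. -/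
open Finset

/-- Auxiliary: the pointwise algebraic identity underlying the Hecke condition. -/
theorem hecke_pointwise (N : ℕ) (r : ℂ) (hr : r ≠ 0) (q : Fin N → Fin N → ℂ)
    (hq0 : ∀ A B, q A B ≠ 0)
    (hqAA : ∀ A, q A A = r) (hqBA : ∀ A B, q B A * q A B = r ^ 2) (A B E F : Fin N) :
    (r / q B A + (r - 1) * kd B A) * Rgl N r q A B E F
        + ((r - r⁻¹) * (if A < B then 1 else 0)) * Rgl N r q B A E F
      = (r - r⁻¹) * Rgl N r q B A E F + kd A E * kd B F := by
  have hK : ∀ X Y : Fin N, r ^ 2 * ((q Y X)⁻¹ * (q X Y)⁻¹) = 1 := by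
    intro X Y
    rw [← mul_inv, hqBA X Y]
    exact mul_inv_cancel₀ (pow_ne_zero 2 hr)
  rcases lt_trichotomy A B with h | h | h
  · have hAB : A ≠ B := ne_of_lt h
    simp only [Rgl, kd, if_pos h, if_neg (not_lt_of_gt h), if_neg hAB, if_neg hAB.symm,
      mul_one, mul_zero, zero_mul, add_zero, zero_add, mul_ite, ite_mul]
    by_cases hAE : A = E <;> by_cases hBF : B = F <;> by_cases hBE : B = E <;> by_cases hAF : A = F <;>
      simp_all <;>
      first
        | ring1
        | linear_combination hK E F
        | linear_combination hK F E
        | linear_combination (mul_inv_cancel₀ hr)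
        | linear_combination -(mul_inv_cancel₀ hr)
        | linear_combination hK E F + (mul_inv_cancel₀ hr)
        | linear_combination hK E F - (mul_inv_cancel₀ hr)
  · subst h
    have hq : r / q A A + (r - 1) * 1 = r := by rw [hqAA, div_self hr]; ring
    simp only [Rgl, kd, if_pos rfl, lt_irrefl, if_neg (lt_irrefl A), ite_true, ite_false,
      mul_zero, zero_mul, add_zero, zero_add, mul_one, hq]
    by_cases hAE : A = E <;> by_cases hAF : A = F <;>
      simp_all <;>
      first
        | ring1
        | linear_combination (mul_inv_cancel₀ hr)
        | linear_combination -(mul_inv_cancel₀ hr)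
        | linear_combination (r + r⁻¹) * (mul_inv_cancel₀ hr)
  · have hAB : A ≠ B := (ne_of_lt h).symm
    simp only [Rgl, kd, if_neg (not_lt_of_gt h), if_pos h, if_neg hAB, if_neg hAB.symm,
      mul_one, mul_zero, zero_mul, add_zero, zero_add, mul_ite, ite_mul]
    by_cases hAE : A = E <;> by_cases hBF : B = F <;> by_cases hBE : B = E <;> by_cases hAF : A = F <;>
      simp_all <;>
      first
        | ring1
        | linear_combination hK E F
        | linear_combination hK F E
        | linear_combination (mul_inv_cancel₀ hr)
        | linear_combination -(mul_inv_cancel₀ hr)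
        | linear_combination hK E F + (mul_inv_cancel₀ hr)
        | linear_combination hK E F - (mul_inv_cancel₀ hr)

/-- the matrix `R̂` defined by `R̂^{AB}_{CD} := R^{BA}_{CD}` satisfies the
Hecke condition `(R̂ − r·Id)(R̂ + r⁻¹·Id) = 0`, i.e. `R̂² = (r − r⁻¹) R̂ + Id`. -/
theorem statement9 (N : ℕ) (hN : 1 ≤ N) (r : ℂ) (hr : r ≠ 0)
    (q : Fin N → Fin N → ℂ) (hq0 : ∀ A B, q A B ≠ 0)
    (hqAA : ∀ A, q A A = r) (hqBA : ∀ A B, q B A * q A B = r ^ 2) :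
    ∀ A B E F : Fin N,
      (∑ C : Fin N, ∑ D : Fin N, Rgl N r q B A C D * Rgl N r q D C E F)
        = (r - r⁻¹) * Rgl N r q B A E F + kd A E * kd B F := by
  intro A B E F
  have key : ∀ C D : Fin N, Rgl N r q B A C D * Rgl N r q D C E F =
      (if A = D then (if B = C then (r / q B A + (r - 1) * kd B A) * Rgl N r q D C E F else 0) else 0)
      + (if B = D then (if A = C then ((r - r⁻¹) * (if A < B then 1 else 0)) * Rgl N r q D C E F else 0) else 0) := by
    intro C D
    by_cases h1 : B = C <;> by_cases h2 : A = D <;> by_cases h3 : A = C <;> by_cases h4 : B = D <;>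
      simp only [Rgl, kd, h1, h2, h3, h4, if_true, if_false, if_pos, if_neg, ite_true, ite_false] <;>
      simp_all [lt_irrefl] <;> ring
  calc (∑ C : Fin N, ∑ D : Fin N, Rgl N r q B A C D * Rgl N r q D C E F)
      = (r / q B A + (r - 1) * kd B A) * Rgl N r q A B E F
          + ((r - r⁻¹) * (if A < B then 1 else 0)) * Rgl N r q B A E F := by
        simp only [key, Finset.sum_add_distrib, Finset.sum_ite_eq, Finset.mem_univ, if_true]
    _ = (r - r⁻¹) * Rgl N r q B A E F + kd A E * kd B F :=
        hecke_pointwise N r hr q hq0 hqAA hqBA A B E F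
end

section
/- The diagonal matrix D provides a 'second inverse' for the multiparametric GL R-matrix: for all free indices A,D,E,F (with summation over repeated indices B,C) one has d^A (d^C)⁻¹ (R⁻¹)^{BA}_{DC} R^{EC}_{BF} = δ^A_F δ^E_D, d^A (d^C)⁻¹ R^{AB}_{CD} (R⁻¹)^{CE}_{FB} = δ^A_F δ^E_D, d^B (d^D)⁻¹ (R⁻¹)^{AB}_{CD} R^{CE}_{FB} = δ^A_F δ^E_D, and d^B (d^D)⁻¹ R^{BA}_{DC} (R⁻¹)^{EC}_{BF} = δ^A_F δ^E_D; moreover the normalization conditions Σ_C R^{AC}_{CB} (d^C)⁻¹ = δ^A_B = Σ_C (R⁻¹)^{AC}_{CB} d^C hold. -/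
/-!
Both `R` and `R⁻¹` are a diagonal part `δ^A_C δ^B_D φ_{AB}` plus a flip part `δ^A_D δ^B_C ψ_{AB}`
with `ψ` supported on `B < A`. In each of the four contractions the diagonal–diagonal term gives
`δ^A_F δ^E_D`, because the diagonal entries of `R` and `R⁻¹` are reciprocal; the other three terms
carry `δ^A_D δ^E_F` and involve `d` only through a sum over the indices strictly between `A` and
`E`. Since `d^{B+1} = r² d^B`, the sums `(r - r⁻¹) Σ d^B` and `(r - r⁻¹) Σ (d^B)⁻¹` over an
interval telescope, and the three terms cancel. The normalization conditions are the same
telescoping sums over all `C < A`.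
-/

open Finset

/-- Entries of the diagonal matrix `D`: `d^A = r^{2A−1}` (paper index `A = i + 1` for the
0-based index `i`). -/
noncomputable def dgl (r : ℂ) (i : ℕ) : ℂ := r ^ (2 * i + 1)

theorem sum_mul_mul_eq_of_diag_add_flip {ι : Type*} [Fintype ι] [DecidableEq ι]
    {X Y : ι → ι → ι → ι → ℂ} {φ ψ φ' ψ' : ι → ι → ℂ}
    (hX : ∀ a b c d, X a b c d = kd a c * kd b d * φ a b + kd a d * kd b c * ψ a b)
    (hY : ∀ a b c d, Y a b c d = kd a c * kd b d * φ' a b + kd a d * kd b c * ψ' a b)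
    (W : ι → ι → ℂ) (A D E F : ι) :
    ∑ B, ∑ C, W B C * X B A D C * Y E C B F =
      kd A F * kd E D * (W D A * (φ D A * φ' D A)) +
        kd A D * kd E F * (W A A * φ A A * ψ' E A + W E E * ψ E A * φ' E E +
          ∑ B, W B B * ψ B A * ψ' E B) := by
  simp only [hX, hY, kd, mul_add, add_mul, sum_add_distrib, ite_mul, mul_ite, one_mul, zero_mul,
    mul_zero, mul_one, sum_ite_irrel, sum_ite_eq, sum_ite_eq', mem_univ, if_true, sum_const_zero]
  split_ifs <;> subst_vars <;> ring

theorem sum_mul_mul_eq_of_diag_add_flip' {ι : Type*} [Fintype ι] [DecidableEq ι]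
    {X Y : ι → ι → ι → ι → ℂ} {φ ψ φ' ψ' : ι → ι → ℂ}
    (hX : ∀ a b c d, X a b c d = kd a c * kd b d * φ a b + kd a d * kd b c * ψ a b)
    (hY : ∀ a b c d, Y a b c d = kd a c * kd b d * φ' a b + kd a d * kd b c * ψ' a b)
    (W : ι → ι → ℂ) (A D E F : ι) :
    ∑ B, ∑ C, W B C * X A B C D * Y C E F B =
      kd A F * kd E D * (W D A * (φ A D * φ' A D)) +
        kd A D * kd E F * (W A A * φ A A * ψ' A E + W E E * ψ A E * φ' E E +
          ∑ B, W B B * ψ A B * ψ' B E) :=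
  sum_mul_mul_eq_of_diag_add_flip (X := fun a b c d => X b a d c) (Y := fun a b c d => Y b a d c)
    (φ := fun a b => φ b a) (ψ := fun a b => ψ b a) (φ' := fun a b => φ' b a)
    (ψ' := fun a b => ψ' b a) (fun a b c d => by rw [hX]; ring) (fun a b c d => by rw [hY]; ring)
    W A D E F

theorem sum_mul_eq_of_diag_add_flip {ι : Type*} [Fintype ι] [DecidableEq ι]
    {X : ι → ι → ι → ι → ℂ} {φ ψ : ι → ι → ℂ}
    (hX : ∀ a b c d, X a b c d = kd a c * kd b d * φ a b + kd a d * kd b c * ψ a b)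
    (g : ι → ℂ) (A B : ι) :
    ∑ C, X A C C B * g C = kd A B * (φ A A * g A + ∑ C, ψ A C * g C) := by
  simp only [hX, kd, mul_add, add_mul, sum_add_distrib, ite_mul, mul_ite, one_mul, zero_mul,
    mul_zero, mul_one, sum_ite_irrel, sum_ite_eq', mem_univ, if_true, sum_const_zero]
  split_ifs <;> subst_vars <;> ring

theorem sum_mul_ite_lt_mul_ite_lt {R ι : Type*} [CommSemiring R] [Fintype ι] [LinearOrder ι]
    [LocallyFiniteOrder ι] (f : ι → R) (a e : ι) (σ τ : R) :
    ∑ b, f b * (if a < b then σ else 0) * (if b < e then τ else 0) =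
      σ * τ * ∑ b ∈ Ioo a e, f b := by
  rw [← filter_lt_lt_eq_Ioo, sum_filter, mul_sum]
  refine sum_congr rfl fun b _ => ?_
  split_ifs <;> simp_all [mul_comm, mul_left_comm]

theorem sum_mul_ite_lt_mul_ite_lt' {R ι : Type*} [CommSemiring R] [Fintype ι] [LinearOrder ι]
    [LocallyFiniteOrder ι] (f : ι → R) (a e : ι) (σ τ : R) :
    ∑ b, f b * (if b < e then τ else 0) * (if a < b then σ else 0) =
      σ * τ * ∑ b ∈ Ioo a e, f b := by
  simp_rw [mul_right_comm (f _)]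
  exact sum_mul_ite_lt_mul_ite_lt f a e σ τ

theorem sum_ite_lt_mul {R ι : Type*} [CommSemiring R] [Fintype ι] [LinearOrder ι]
    [LocallyFiniteOrderBot ι] (f : ι → R) (a : ι) (σ : R) :
    ∑ b, (if b < a then σ else 0) * f b = σ * ∑ b ∈ Iio a, f b := by
  simp only [ite_mul, zero_mul, ← sum_filter, filter_gt_eq_Iio, mul_sum]

theorem dgl_ne_zero {r : ℂ} (hr : r ≠ 0) (i : ℕ) : dgl r i ≠ 0 := pow_ne_zero _ hr

theorem dgl_zero (r : ℂ) : dgl r 0 = r := pow_one r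

theorem dgl_succ (r : ℂ) (i : ℕ) : dgl r (i + 1) = r ^ 2 * dgl r i := by
  simp only [dgl]
  ring

theorem sub_inv_mul_sum_Ico_dgl {r : ℂ} (hr : r ≠ 0) {a e : ℕ} (h : a ≤ e) :
    (r - r⁻¹) * ∑ i ∈ Ico a e, dgl r i = r⁻¹ * (dgl r e - dgl r a) := by
  rw [← sum_Ico_sub (dgl r) h, mul_sum, mul_sum]
  refine sum_congr rfl fun i _ => ?_
  rw [dgl_succ]
  field_simp

theorem sub_inv_mul_sum_Ico_inv_dgl {r : ℂ} (hr : r ≠ 0) {a e : ℕ} (h : a ≤ e) :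
    (r - r⁻¹) * ∑ i ∈ Ico a e, (dgl r i)⁻¹ = r * ((dgl r a)⁻¹ - (dgl r e)⁻¹) := by
  rw [mul_sub, ← neg_sub (r * (dgl r e)⁻¹), ← sum_Ico_sub (fun i => r * (dgl r i)⁻¹) h,
    ← sum_neg_distrib, mul_sum]
  refine sum_congr rfl fun i _ => ?_
  rw [dgl_succ]
  field_simp [dgl_ne_zero hr i]
  ring

theorem Fin.sum_Ioo_val {M : Type*} [AddCommMonoid M] {N : ℕ} (f : ℕ → M) (a e : Fin N) :
    ∑ b ∈ Ioo a e, f b = ∑ i ∈ Ioo (a : ℕ) e, f i := by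
  rw [← Fin.map_valEmbedding_Ioo, sum_map]
  rfl

theorem Fin.sum_Iio_val {M : Type*} [AddCommMonoid M] {N : ℕ} (f : ℕ → M) (a : Fin N) :
    ∑ b ∈ Iio a, f b = ∑ i ∈ range a, f i := by
  rw [← Nat.Iio_eq_range, ← Fin.map_valEmbedding_Iio, sum_map]
  rfl

theorem sub_inv_mul_sum_Ioo_dgl {N : ℕ} {r : ℂ} (hr : r ≠ 0) {a e : Fin N} (h : a < e) :
    (r - r⁻¹) * ∑ b ∈ Ioo a e, dgl r b = r⁻¹ * (dgl r e - r ^ 2 * dgl r a) := by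
  rw [Fin.sum_Ioo_val (dgl r), ← Ico_add_one_left_eq_Ioo, ← dgl_succ]
  exact sub_inv_mul_sum_Ico_dgl hr h

theorem sub_inv_mul_sum_Ioo_inv_dgl {N : ℕ} {r : ℂ} (hr : r ≠ 0) {a e : Fin N} (h : a < e) :
    (r - r⁻¹) * ∑ b ∈ Ioo a e, (dgl r b)⁻¹ = r * ((r ^ 2 * dgl r a)⁻¹ - (dgl r e)⁻¹) := by
  rw [Fin.sum_Ioo_val (fun i => (dgl r i)⁻¹), ← Ico_add_one_left_eq_Ioo, ← dgl_succ]
  exact sub_inv_mul_sum_Ico_inv_dgl hr h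

theorem sub_inv_mul_sum_Iio_dgl {N : ℕ} {r : ℂ} (hr : r ≠ 0) (a : Fin N) :
    (r - r⁻¹) * ∑ b ∈ Iio a, dgl r b = r⁻¹ * (dgl r a - r) := by
  rw [Fin.sum_Iio_val (dgl r), range_eq_Ico, sub_inv_mul_sum_Ico_dgl hr (Nat.zero_le _), dgl_zero]

theorem sub_inv_mul_sum_Iio_inv_dgl {N : ℕ} {r : ℂ} (hr : r ≠ 0) (a : Fin N) :
    (r - r⁻¹) * ∑ b ∈ Iio a, (dgl r b)⁻¹ = r * (r⁻¹ - (dgl r a)⁻¹) := by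
  rw [Fin.sum_Iio_val (fun i => (dgl r i)⁻¹), range_eq_Ico,
    sub_inv_mul_sum_Ico_inv_dgl hr (Nat.zero_le _), dgl_zero]

theorem Rgl_eq_diag_add_flip (N : ℕ) (s : ℂ) (p : Fin N → Fin N → ℂ) (a b c d : Fin N) :
    Rgl N s p a b c d =
      kd a c * kd b d * Rgl N s p a b a b + kd a d * kd b c * (if b < a then s - s⁻¹ else 0) := by
  simp only [Rgl, kd]
  split_ifs <;> subst_vars <;> simp_all

theorem RglInv_eq_diag_add_flip (N : ℕ) (r : ℂ) (q : Fin N → Fin N → ℂ) (a b c d : Fin N) :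
    RglInv N r q a b c d =
      kd a c * kd b d * RglInv N r q a b a b +
        kd a d * kd b c * (if b < a then r⁻¹ - r else 0) := by
  simp only [RglInv]
  rw [Rgl_eq_diag_add_flip, inv_inv]

theorem Rgl_diag_self {N : ℕ} {s : ℂ} {p : Fin N → Fin N → ℂ} (hs : s ≠ 0) {a : Fin N}
    (hp : p a a = s) : Rgl N s p a a a a = s := by
  simp [Rgl, kd, hp, hs]

theorem RglInv_diag_self {N : ℕ} {r : ℂ} {q : Fin N → Fin N → ℂ} (hr : r ≠ 0)
    (hqAA : ∀ A, q A A = r) (a : Fin N) : RglInv N r q a a a a = r⁻¹ :=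
  Rgl_diag_self (inv_ne_zero hr) (by rw [hqAA])

theorem RglInv_diag_mul_Rgl_diag {N : ℕ} {r : ℂ} {q : Fin N → Fin N → ℂ} (hr : r ≠ 0)
    (hq0 : ∀ A B, q A B ≠ 0) (hqAA : ∀ A, q A A = r) (a b : Fin N) :
    RglInv N r q a b a b * Rgl N r q a b a b = 1 := by
  rcases eq_or_ne a b with rfl | hab
  · rw [RglInv_diag_self hr hqAA, Rgl_diag_self hr (hqAA a), inv_mul_cancel₀ hr]
  · simp only [RglInv, Rgl, kd, if_neg hab, ↓reduceIte, mul_zero, zero_mul, add_zero, mul_one]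
    field_simp [hq0 a b]

theorem Rgl_diag_mul_RglInv_diag {N : ℕ} {r : ℂ} {q : Fin N → Fin N → ℂ} (hr : r ≠ 0)
    (hq0 : ∀ A B, q A B ≠ 0) (hqAA : ∀ A, q A A = r) (a b : Fin N) :
    Rgl N r q a b a b * RglInv N r q a b a b = 1 := by
  rw [mul_comm, RglInv_diag_mul_Rgl_diag hr hq0 hqAA]

section Identities

variable {N : ℕ} {r : ℂ} {q : Fin N → Fin N → ℂ}

theorem sum_dgl_fst_mul_RglInv_mul_Rgl (hr : r ≠ 0) (hq0 : ∀ A B, q A B ≠ 0)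
    (hqAA : ∀ A, q A A = r) (A D E F : Fin N) :
    ∑ B : Fin N, ∑ C : Fin N,
        dgl r A.val * (dgl r C.val)⁻¹ * RglInv N r q B A D C * Rgl N r q E C B F =
      kd A F * kd E D := by
  rw [sum_mul_mul_eq_of_diag_add_flip (RglInv_eq_diag_add_flip N r q) (Rgl_eq_diag_add_flip N r q)
    (fun _ C => dgl r A * (dgl r C)⁻¹), mul_inv_cancel₀ (dgl_ne_zero hr _), one_mul, one_mul,
    RglInv_diag_mul_Rgl_diag hr hq0 hqAA, mul_one, RglInv_diag_self hr hqAA,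
    Rgl_diag_self hr (hqAA E), sum_mul_ite_lt_mul_ite_lt, ← mul_sum]
  rcases eq_or_ne A D with rfl | hAD
  swap
  · simp [kd, hAD]
  split_ifs with hAE
  · have key := sub_inv_mul_sum_Ioo_inv_dgl hr hAE
    linear_combination (norm := skip) (kd A A * kd E F * (r⁻¹ - r) * dgl r A) * key
    field_simp [dgl_ne_zero hr]
    ring
  · simp [Ioo_eq_empty hAE]

theorem sum_dgl_fst_mul_Rgl_mul_RglInv (hr : r ≠ 0) (hq0 : ∀ A B, q A B ≠ 0)
    (hqAA : ∀ A, q A A = r) (A D E F : Fin N) :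
    ∑ B : Fin N, ∑ C : Fin N,
        dgl r A.val * (dgl r C.val)⁻¹ * Rgl N r q A B C D * RglInv N r q C E F B =
      kd A F * kd E D := by
  rw [sum_mul_mul_eq_of_diag_add_flip' (Rgl_eq_diag_add_flip N r q) (RglInv_eq_diag_add_flip N r q)
    (fun _ C => dgl r A * (dgl r C)⁻¹), mul_inv_cancel₀ (dgl_ne_zero hr _), one_mul, one_mul,
    Rgl_diag_mul_RglInv_diag hr hq0 hqAA, mul_one, RglInv_diag_self hr hqAA,
    Rgl_diag_self hr (hqAA A), sum_mul_ite_lt_mul_ite_lt', ← mul_sum]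
  rcases eq_or_ne A D with rfl | hAD
  swap
  · simp [kd, hAD]
  split_ifs with hEA
  · have key := sub_inv_mul_sum_Ioo_inv_dgl hr hEA
    linear_combination (norm := skip) (kd A A * kd E F * (r⁻¹ - r) * dgl r A) * key
    field_simp [dgl_ne_zero hr]
    ring
  · simp [Ioo_eq_empty hEA]

theorem sum_dgl_snd_mul_RglInv_mul_Rgl (hr : r ≠ 0) (hq0 : ∀ A B, q A B ≠ 0)
    (hqAA : ∀ A, q A A = r) (A D E F : Fin N) :
    ∑ B : Fin N, ∑ C : Fin N,
        dgl r B.val * (dgl r D.val)⁻¹ * RglInv N r q A B C D * Rgl N r q C E F B =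
      kd A F * kd E D := by
  rw [sum_mul_mul_eq_of_diag_add_flip' (RglInv_eq_diag_add_flip N r q) (Rgl_eq_diag_add_flip N r q)
    (fun B _ => dgl r B * (dgl r D)⁻¹), mul_inv_cancel₀ (dgl_ne_zero hr _), one_mul,
    RglInv_diag_mul_Rgl_diag hr hq0 hqAA, mul_one, RglInv_diag_self hr hqAA,
    Rgl_diag_self hr (hqAA E), sum_mul_ite_lt_mul_ite_lt', ← sum_mul]
  rcases eq_or_ne A D with rfl | hAD
  swap
  · simp [kd, hAD]
  rw [mul_inv_cancel₀ (dgl_ne_zero hr _), one_mul]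
  split_ifs with hEA
  · have key := sub_inv_mul_sum_Ioo_dgl hr hEA
    linear_combination (norm := skip) (kd A A * kd E F * (r⁻¹ - r) * (dgl r A)⁻¹) * key
    field_simp [dgl_ne_zero hr]
    ring
  · simp [Ioo_eq_empty hEA]

theorem sum_dgl_snd_mul_Rgl_mul_RglInv (hr : r ≠ 0) (hq0 : ∀ A B, q A B ≠ 0)
    (hqAA : ∀ A, q A A = r) (A D E F : Fin N) :
    ∑ B : Fin N, ∑ C : Fin N,
        dgl r B.val * (dgl r D.val)⁻¹ * Rgl N r q B A D C * RglInv N r q E C B F =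
      kd A F * kd E D := by
  rw [sum_mul_mul_eq_of_diag_add_flip (Rgl_eq_diag_add_flip N r q) (RglInv_eq_diag_add_flip N r q)
    (fun B _ => dgl r B * (dgl r D)⁻¹), mul_inv_cancel₀ (dgl_ne_zero hr _), one_mul,
    Rgl_diag_mul_RglInv_diag hr hq0 hqAA, mul_one, RglInv_diag_self hr hqAA,
    Rgl_diag_self hr (hqAA A), sum_mul_ite_lt_mul_ite_lt, ← sum_mul]
  rcases eq_or_ne A D with rfl | hAD
  swap
  · simp [kd, hAD]
  rw [mul_inv_cancel₀ (dgl_ne_zero hr _), one_mul]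
  split_ifs with hAE
  · have key := sub_inv_mul_sum_Ioo_dgl hr hAE
    linear_combination (norm := skip) (kd A A * kd E F * (r⁻¹ - r) * (dgl r A)⁻¹) * key
    field_simp [dgl_ne_zero hr]
    ring
  · simp [Ioo_eq_empty hAE]

theorem sum_Rgl_mul_inv_dgl (hr : r ≠ 0) (hqAA : ∀ A, q A A = r) (A B : Fin N) :
    ∑ C : Fin N, Rgl N r q A C C B * (dgl r C.val)⁻¹ = kd A B := by
  rw [sum_mul_eq_of_diag_add_flip (Rgl_eq_diag_add_flip N r q) (fun C => (dgl r C)⁻¹),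
    Rgl_diag_self hr (hqAA A), sum_ite_lt_mul, sub_inv_mul_sum_Iio_inv_dgl hr]
  field_simp
  ring

theorem sum_RglInv_mul_dgl (hr : r ≠ 0) (hqAA : ∀ A, q A A = r) (A B : Fin N) :
    ∑ C : Fin N, RglInv N r q A C C B * dgl r C.val = kd A B := by
  rw [sum_mul_eq_of_diag_add_flip (RglInv_eq_diag_add_flip N r q) (dgl r ·),
    RglInv_diag_self hr hqAA, sum_ite_lt_mul, ← neg_sub, neg_mul, sub_inv_mul_sum_Iio_dgl hr]
  field_simp
  ring

end Identities

theorem statement10_general (N : ℕ) (r : ℂ) (hr : r ≠ 0)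
    (q : Fin N → Fin N → ℂ) (hq0 : ∀ A B, q A B ≠ 0)
    (hqAA : ∀ A, q A A = r) :
    (∀ A D E F : Fin N,
      (∑ B : Fin N, ∑ C : Fin N,
          dgl r A.val * (dgl r C.val)⁻¹ * RglInv N r q B A D C * Rgl N r q E C B F)
        = kd A F * kd E D) ∧
    (∀ A D E F : Fin N,
      (∑ B : Fin N, ∑ C : Fin N,
          dgl r A.val * (dgl r C.val)⁻¹ * Rgl N r q A B C D * RglInv N r q C E F B)
        = kd A F * kd E D) ∧
    (∀ A D E F : Fin N,
      (∑ B : Fin N, ∑ C : Fin N,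
          dgl r B.val * (dgl r D.val)⁻¹ * RglInv N r q A B C D * Rgl N r q C E F B)
        = kd A F * kd E D) ∧
    (∀ A D E F : Fin N,
      (∑ B : Fin N, ∑ C : Fin N,
          dgl r B.val * (dgl r D.val)⁻¹ * Rgl N r q B A D C * RglInv N r q E C B F)
        = kd A F * kd E D) ∧
    (∀ A B : Fin N, (∑ C : Fin N, Rgl N r q A C C B * (dgl r C.val)⁻¹) = kd A B) ∧
    (∀ A B : Fin N, (∑ C : Fin N, RglInv N r q A C C B * dgl r C.val) = kd A B) :=
  ⟨sum_dgl_fst_mul_RglInv_mul_Rgl hr hq0 hqAA, sum_dgl_fst_mul_Rgl_mul_RglInv hr hq0 hqAA,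
    sum_dgl_snd_mul_RglInv_mul_Rgl hr hq0 hqAA, sum_dgl_snd_mul_Rgl_mul_RglInv hr hq0 hqAA,
    sum_Rgl_mul_inv_dgl hr hqAA, sum_RglInv_mul_dgl hr hqAA⟩

/-- the diagonal matrix `D` provides a 'second inverse' for the
multiparametric GL R-matrix (four identities), together with the normalization
conditions `Σ_C R^{AC}_{CB} (d^C)⁻¹ = δ^A_B = Σ_C (R⁻¹)^{AC}_{CB} d^C`. -/
theorem statement10 (N : ℕ) (hN : 1 ≤ N) (r : ℂ) (hr : r ≠ 0)
    (q : Fin N → Fin N → ℂ) (hq0 : ∀ A B, q A B ≠ 0)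
    (hqAA : ∀ A, q A A = r) (hqBA : ∀ A B, q B A * q A B = r ^ 2) :
    (∀ A D E F : Fin N,
      (∑ B : Fin N, ∑ C : Fin N,
          dgl r A.val * (dgl r C.val)⁻¹ * RglInv N r q B A D C * Rgl N r q E C B F)
        = kd A F * kd E D) ∧
    (∀ A D E F : Fin N,
      (∑ B : Fin N, ∑ C : Fin N,
          dgl r A.val * (dgl r C.val)⁻¹ * Rgl N r q A B C D * RglInv N r q C E F B)
        = kd A F * kd E D) ∧
    (∀ A D E F : Fin N,
      (∑ B : Fin N, ∑ C : Fin N,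
          dgl r B.val * (dgl r D.val)⁻¹ * RglInv N r q A B C D * Rgl N r q C E F B)
        = kd A F * kd E D) ∧
    (∀ A D E F : Fin N,
      (∑ B : Fin N, ∑ C : Fin N,
          dgl r B.val * (dgl r D.val)⁻¹ * Rgl N r q B A D C * RglInv N r q E C B F)
        = kd A F * kd E D) ∧
    (∀ A B : Fin N, (∑ C : Fin N, Rgl N r q A C C B * (dgl r C.val)⁻¹) = kd A B) ∧
    (∀ A B : Fin N, (∑ C : Fin N, RglInv N r q A C C B * dgl r C.val) = kd A B) :=
  statement10_general N r hr q hq0 hqAA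
end
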